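/- Let G = SL_n or GL_n, and let I ⊆ G(L) be the Iwahori subgroup consisting of the elements of G(L) that are of Iwahori form. Call x ∈ G(L) an ε-monomial matrix if x has exactly one nonzero entry in each row and each column and every nonzero entry is an integer power of ε. Suppose M ∈ I·x·I and M' ∈ I·x'·I, where x and x' are ε-monomial matrices, and suppose that for every 1 ≤ m ≤ n and every pair (s, t) of strictly increasing m-tuples of indices from {1, …, n}, the valuation of the determinant of the m×m minor of M with rows s and columns t equals the valuation of the determinant of the corresponding minor of M' (with val(0) = ∞). Then x = x'. -/

import Mathlib

noncomputable section

open Matrix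

/-- The ε-adic valuation on `L = k̄((ε))`, with `val 0 = ∞`. -/
def val {K : Type*} [Field K] (x : LaurentSeries K) : WithTop ℤ := x.orderTop

/-- The uniformizer ε of the Laurent series field. -/
def eps (K : Type*) [Field K] : LaurentSeries K := HahnSeries.single 1 1

/-- A square matrix over `L = k̄((ε))` is of Iwahori form; the Iwahori subgroup `I` of
`G(L)` consists of the elements of `G(L)` of Iwahori form. -/
def IwahoriForm {K : Type*} [Field K] {n : ℕ}
    (M : Matrix (Fin n) (Fin n) (LaurentSeries K)) : Prop :=
  (∀ i, val (M i i) = 0) ∧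
  (∀ i j : Fin n, i < j → 0 ≤ val (M i j)) ∧
  (∀ i j : Fin n, j < i → 1 ≤ val (M i j))

/-- `x` is an ε-monomial matrix: exactly one nonzero entry in each row and each column,
and every nonzero entry is an integer power of ε. -/
def EpsMonomial {K : Type*} [Field K] {n : ℕ}
    (x : Matrix (Fin n) (Fin n) (LaurentSeries K)) : Prop :=
  (∀ i, ∃! j, x i j ≠ 0) ∧ (∀ j, ∃! i, x i j ≠ 0) ∧
  (∀ i j, x i j ≠ 0 → ∃ m : ℤ, x i j = eps K ^ m)

/-- `M` lies in the Iwahori double coset `I·x·I`. -/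
def InIxI {K : Type*} [Field K] {n : ℕ}
    (x M : Matrix (Fin n) (Fin n) (LaurentSeries K)) : Prop :=
  ∃ N₁ N₂, IwahoriForm N₁ ∧ IwahoriForm N₂ ∧ M = N₁ * x * N₂

/-!
For an additive valuation `v`, let `minMinorVal v m A` be the least valuation of an `m × m`
minor of `A`. Expanding the minors of a product shows that it can only grow under
multiplication by integral matrices, so it is unchanged by integral matrices with unit
determinant. Conjugation by `D_r = epsDiag K (stepExponent r) = diag(ε, …, ε, 1, …, 1)`
(`r` entries `ε`) keeps an Iwahori matrix integral with unit determinant, so for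
`M = N₁ x N₂` the value of `minMinorVal` at `D_r M D_c⁻¹` equals its value at `D_r x D_c⁻¹`,
and the former only depends on the valuations of the minors of `M`. For the monomial matrix
`D_r x D_c⁻¹` with entry valuations `w i` it is the least sum of `m` of the `w i`, and these
least sums for all `m` determine the multiset of the `w i`. Raising `r` from `i` to `i + 1`
changes only the weight of row `i`, so comparing the two multisets isolates
`a i - [σ i < c]`, where `x i (σ i) = ε ^ a i`; varying `c` recovers `σ i` and `a i`.
-/

namespace Matrix

variable {R ι κ : Type*} [CommRing R] {m : ℕ}

theorem det_submatrix_mul_eq_sum [Fintype ι] (P : Matrix ι ι R) (A : Matrix ι κ R)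
    (s : Fin m → ι) (t : Fin m → κ) :
    ((P * A).submatrix s t).det
      = ∑ u : Fin m → ι, (∏ i, P (s i) (u i)) * (A.submatrix u t).det := by
  have hrows : ((P * A).submatrix s t : Fin m → Fin m → R) =
      fun i => ∑ k, P (s i) k • fun j => A k (t j) := by
    funext i j
    simp [mul_apply, Finset.sum_apply]
  change detRowAlternating.toMultilinearMap ((P * A).submatrix s t) = _
  rw [hrows, MultilinearMap.map_sum]
  exact Finset.sum_congr rfl fun u _ =>
    detRowAlternating.toMultilinearMap.map_smul_univ (fun i => P (s i) (u i))
      fun i j => A (u i) (t j)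

theorem det_submatrix_eq_zero_of_not_injective_left (A : Matrix ι κ R) {s : Fin m → ι}
    (hs : ¬ s.Injective) (t : Fin m → κ) : (A.submatrix s t).det = 0 := by
  obtain ⟨i, j, hij, hne⟩ : ∃ i j, s i = s j ∧ i ≠ j := by
    simpa [Function.Injective] using hs
  exact det_zero_of_row_eq hne (by ext; simp [hij])

theorem det_submatrix_eq_zero_of_not_injective_right (A : Matrix ι κ R) (s : Fin m → ι)
    {t : Fin m → κ} (ht : ¬ t.Injective) : (A.submatrix s t).det = 0 := by
  rw [← det_transpose, transpose_submatrix]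
  exact det_submatrix_eq_zero_of_not_injective_left Aᵀ ht s

end Matrix

namespace AddValuation

variable {R Γ : Type*} [CommRing R] [LinearOrderedAddCommMonoidWithTop Γ] (v : AddValuation R Γ)

theorem map_prod {ι : Type*} (s : Finset ι) (f : ι → R) :
    v (∏ i ∈ s, f i) = ∑ i ∈ s, v (f i) := by
  classical
  induction s using Finset.induction with
  | empty => simp
  | insert a s ha ih => rw [Finset.prod_insert ha, Finset.sum_insert ha, v.map_mul, ih]

theorem map_intCast_units (u : ℤˣ) : v ((u : ℤ) : R) = 0 := by
  rcases Int.units_eq_one_or u with rfl | rfl <;> simp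

theorem le_map_det {ι : Type*} [Fintype ι] [DecidableEq ι] {A : Matrix ι ι R} {g : Γ}
    (h : ∀ σ : Equiv.Perm ι, g ≤ ∑ i, v (A (σ i) i)) : g ≤ v A.det := by
  rw [det_apply']
  refine v.map_le_sum fun σ _ => ?_
  rw [v.map_mul, v.map_intCast_units, zero_add, v.map_prod]
  exact h σ

theorem map_det_nonneg {ι : Type*} [Fintype ι] [DecidableEq ι] {A : Matrix ι ι R}
    (h : ∀ i j, 0 ≤ v (A i j)) : 0 ≤ v A.det :=
  v.le_map_det fun _ => Finset.sum_nonneg fun _ _ => h _ _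

theorem map_det_submatrix_perm {m : ℕ} (A : Matrix (Fin m) (Fin m) R)
    (π τ : Equiv.Perm (Fin m)) : v (A.submatrix π τ).det = v A.det := by
  change v ((A.submatrix π id).submatrix id τ).det = _
  rw [det_permute', det_permute, v.map_mul, v.map_mul, v.map_intCast_units,
    v.map_intCast_units, zero_add, zero_add]

theorem map_det_submatrix_congr_of_strictMono {ι κ : Type*} [LinearOrder ι] [LinearOrder κ]
    {m : ℕ} {A B : Matrix ι κ R}
    (h : ∀ (s : Fin m → ι) (t : Fin m → κ), StrictMono s → StrictMono t →
      v (A.submatrix s t).det = v (B.submatrix s t).det)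
    (s : Fin m → ι) (t : Fin m → κ) : v (A.submatrix s t).det = v (B.submatrix s t).det := by
  by_cases hs : s.Injective
  · by_cases ht : t.Injective
    · have hsort : ∀ C : Matrix ι κ R, v (C.submatrix s t).det =
          v (C.submatrix (s ∘ Tuple.sort s) (t ∘ Tuple.sort t)).det :=
        fun C => (v.map_det_submatrix_perm _ _ _).symm
      rw [hsort A, hsort B]
      exact h _ _ ((Tuple.monotone_sort s).strictMono_of_injective (hs.comp (Equiv.injective _)))
        ((Tuple.monotone_sort t).strictMono_of_injective (ht.comp (Equiv.injective _)))
    · simp only [det_submatrix_eq_zero_of_not_injective_right _ s ht]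
  · simp only [det_submatrix_eq_zero_of_not_injective_left _ hs t]

end AddValuation

section SubsetSums

def minSubsetSum {ι α : Type*} [Fintype ι] [AddCommMonoid α] [SemilatticeInf α] [OrderTop α]
    (w : ι → α) (m : ℕ) : α :=
  (Finset.univ.powersetCard m).inf fun S => ∑ i ∈ S, w i

variable {α : Type*} [AddCommGroup α] [LinearOrder α] [IsOrderedAddMonoid α] {m n : ℕ}

theorem Fin.val_le_of_strictMono {f : Fin m → Fin n} (hf : StrictMono f) (j : Fin m) :
    (j : ℕ) ≤ f j := by
  obtain ⟨k, hk⟩ := j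
  induction k with
  | zero => exact Nat.zero_le _
  | succ k ih =>
      have hlt : f ⟨k, by omega⟩ < f ⟨k + 1, hk⟩ := hf (Fin.mk_lt_mk.mpr k.lt_succ_self)
      have := ih (by omega)
      rw [Fin.lt_def] at hlt
      simp only at this ⊢
      omega

theorem sum_castLE_le_sum_of_monotone {u : Fin n → α} (hu : Monotone u) (hmn : m ≤ n)
    {S : Finset (Fin n)} (hS : S.card = m) :
    ∑ j : Fin m, u (Fin.castLE hmn j) ≤ ∑ i ∈ S, u i := by
  rw [← S.image_orderEmbOfFin_univ hS,
    Finset.sum_image fun _ _ _ _ h => (S.orderEmbOfFin hS).injective h]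
  exact Finset.sum_le_sum fun j _ =>
    hu (Fin.val_le_of_strictMono (S.orderEmbOfFin hS).strictMono j)

theorem minSubsetSum_eq_sum_sort (w : Fin n → α) (hmn : m ≤ n) :
    minSubsetSum (fun i => (w i : WithTop α)) m
      = ((∑ j : Fin m, w (Tuple.sort w (Fin.castLE hmn j)) : α) : WithTop α) := by
  classical
  set π := Tuple.sort w
  have hinj : (fun j : Fin m => π (Fin.castLE hmn j)).Injective :=
    fun _ _ h => Fin.castLE_injective hmn (π.injective h)
  refine le_antisymm ?_ (Finset.le_inf fun S hS => ?_)
  · refine (Finset.inf_le (b := Finset.univ.image fun j => π (Fin.castLE hmn j))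
      (by simp [Finset.mem_powersetCard, Finset.card_image_of_injective _ hinj])).trans_eq ?_
    rw [Finset.sum_image fun _ _ _ _ h => hinj h, WithTop.coe_sum]
  · obtain ⟨-, hcard⟩ := Finset.mem_powersetCard.mp hS
    have hsum : ∑ i ∈ S.map π.symm.toEmbedding, w (π i) = ∑ i ∈ S, w i := by
      simp [Finset.sum_map]
    rw [← WithTop.coe_sum, ← hsum, WithTop.coe_le_coe]
    exact sum_castLE_le_sum_of_monotone (Tuple.monotone_sort w) hmn (by simpa using hcard)

theorem univ_val_map_comp_perm {β : Type*} (w : Fin n → β) (π : Equiv.Perm (Fin n)) :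
    Finset.univ.val.map (w ∘ π) = Finset.univ.val.map w := by
  rw [← Multiset.map_map, Multiset.map_univ_val_equiv]

theorem univ_val_map_eq_of_minSubsetSum_eq {w w' : Fin n → α}
    (h : ∀ m, 1 ≤ m → minSubsetSum (fun i => (w i : WithTop α)) m
      = minSubsetSum (fun i => (w' i : WithTop α)) m) :
    Finset.univ.val.map w = Finset.univ.val.map w' := by
  have hpartial : ∀ m (hmn : m ≤ n), ∑ j : Fin m, w (Tuple.sort w (Fin.castLE hmn j))
      = ∑ j : Fin m, w' (Tuple.sort w' (Fin.castLE hmn j)) := by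
    intro m hmn
    rcases Nat.eq_zero_or_pos m with rfl | hm
    · simp
    · have := h m hm
      rwa [minSubsetSum_eq_sum_sort w hmn, minSubsetSum_eq_sum_sort w' hmn,
        WithTop.coe_inj] at this
  have hsorted : w ∘ Tuple.sort w = w' ∘ Tuple.sort w' := by
    funext k
    have hsucc := hpartial (k + 1) k.2
    rw [Fin.sum_univ_castSucc, Fin.sum_univ_castSucc] at hsucc
    change ∑ j : Fin k, w (Tuple.sort w (Fin.castLE k.2.le j)) + w (Tuple.sort w k)
      = ∑ j : Fin k, w' (Tuple.sort w' (Fin.castLE k.2.le j)) + w' (Tuple.sort w' k) at hsucc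
    rw [hpartial k k.2.le] at hsucc
    exact add_left_cancel hsucc
  rw [← univ_val_map_comp_perm w (Tuple.sort w), hsorted, univ_val_map_comp_perm]

end SubsetSums

section MinorValuation

variable {R Γ : Type*} [CommRing R] [LinearOrderedAddCommMonoidWithTop Γ]
variable {ι κ : Type*} [Fintype ι] [Fintype κ] {m : ℕ}

def minMinorVal (v : AddValuation R Γ) (m : ℕ) (A : Matrix ι κ R) : Γ :=
  Finset.univ.inf fun p : (Fin m → ι) × (Fin m → κ) => v (A.submatrix p.1 p.2).det

variable {v : AddValuation R Γ}

theorem minMinorVal_le (A : Matrix ι κ R) (s : Fin m → ι) (t : Fin m → κ) :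
    minMinorVal v m A ≤ v (A.submatrix s t).det :=
  Finset.inf_le (f := fun p : (Fin m → ι) × (Fin m → κ) => v (A.submatrix p.1 p.2).det)
    (Finset.mem_univ (s, t))

theorem le_minMinorVal {A : Matrix ι κ R} {g : Γ}
    (h : ∀ (s : Fin m → ι) (t : Fin m → κ), g ≤ v (A.submatrix s t).det) :
    g ≤ minMinorVal v m A :=
  Finset.le_inf fun (p : (Fin m → ι) × (Fin m → κ)) _ => h p.1 p.2

theorem minMinorVal_transpose (A : Matrix ι κ R) : minMinorVal v m Aᵀ = minMinorVal v m A := by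
  refine le_antisymm (le_minMinorVal fun s t => ?_) (le_minMinorVal fun s t => ?_)
  all_goals
    rw [← det_transpose, transpose_submatrix]
    exact minMinorVal_le _ t s

theorem minMinorVal_le_mul_left {P : Matrix ι ι R} (hP : ∀ i j, 0 ≤ v (P i j))
    (A : Matrix ι κ R) : minMinorVal v m A ≤ minMinorVal v m (P * A) := by
  refine le_minMinorVal fun s t => ?_
  rw [det_submatrix_mul_eq_sum]
  refine v.map_le_sum fun u _ => ?_
  rw [v.map_mul, v.map_prod]
  exact le_add_of_nonneg_of_le (Finset.sum_nonneg fun i _ => hP _ _) (minMinorVal_le A u t)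

theorem minMinorVal_le_mul_right {Q : Matrix κ κ R} (hQ : ∀ i j, 0 ≤ v (Q i j))
    (A : Matrix ι κ R) : minMinorVal v m A ≤ minMinorVal v m (A * Q) := by
  rw [← minMinorVal_transpose A, ← minMinorVal_transpose (A * Q), transpose_mul]
  exact minMinorVal_le_mul_left (fun i j => hQ j i) Aᵀ

theorem minMinorVal_diagonal_mul_mul_congr [DecidableEq ι] [DecidableEq κ] {A B : Matrix ι κ R}
    (h : ∀ (s : Fin m → ι) (t : Fin m → κ),
      v (A.submatrix s t).det = v (B.submatrix s t).det)
    (d : ι → R) (e : κ → R) :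
    minMinorVal v m (diagonal d * A * diagonal e)
      = minMinorVal v m (diagonal d * B * diagonal e) := by
  have hsub : ∀ (C : Matrix ι κ R) (s : Fin m → ι) (t : Fin m → κ),
      (diagonal d * C * diagonal e).submatrix s t
        = diagonal (d ∘ s) * C.submatrix s t * diagonal (e ∘ t) := by
    intro C s t
    ext i j
    simp [mul_diagonal, diagonal_mul]
  refine Finset.inf_congr rfl fun p _ => ?_
  simp only [hsub, det_mul, v.map_mul, h]

theorem minMinorVal_of_monomial {B : Matrix ι κ R} {σ : ι → κ} (hσ : σ.Injective)
    (hzero : ∀ i j, j ≠ σ i → B i j = 0) {w : ι → Γ} (hw : ∀ i, v (B i (σ i)) = w i) :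
    minMinorVal v m B = minSubsetSum w m := by
  classical
  refine le_antisymm (Finset.le_inf fun S hS => ?_) (le_minMinorVal fun s t => ?_)
  · obtain ⟨-, hcard⟩ := Finset.mem_powersetCard.mp hS
    set e := S.equivFin.trans (finCongr hcard)
    set s : Fin m → ι := fun j => e.symm j
    have hdiag : B.submatrix s (σ ∘ s) = diagonal fun j => B (s j) (σ (s j)) := by
      ext j k
      rcases eq_or_ne j k with rfl | hjk
      · simp
      · refine (hzero _ _ fun h => hjk ?_).trans (diagonal_apply_ne _ hjk).symm
        simpa [s] using hσ h.symm
    calc minMinorVal v m B ≤ v (B.submatrix s (σ ∘ s)).det := minMinorVal_le B s (σ ∘ s)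
      _ = ∑ j, w (s j) := by simp only [hdiag, det_diagonal, v.map_prod, hw]
      _ = ∑ i ∈ S, w i := by
          rw [← Finset.sum_coe_sort S, ← e.symm.sum_comp]
  · by_cases hs : s.Injective
    swap
    · simp [det_submatrix_eq_zero_of_not_injective_left B hs t]
    have hS : Finset.univ.image s ∈ Finset.univ.powersetCard m := by
      simp [Finset.mem_powersetCard, Finset.card_image_of_injective _ hs]
    calc minSubsetSum w m ≤ ∑ i ∈ Finset.univ.image s, w i := Finset.inf_le hS
      _ = ∑ j, w (s j) := Finset.sum_image fun _ _ _ _ h => hs h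
      _ ≤ v (B.submatrix s t).det := v.le_map_det fun τ => ?_
    by_cases hτ : ∀ i, t i = σ (s (τ i))
    · simp only [submatrix_apply, hτ, hw]
      exact (Equiv.sum_comp τ fun i => w (s i)).ge
    · obtain ⟨i, hi⟩ := not_forall.mp hτ
      rw [← v.map_prod, Finset.prod_eq_zero (Finset.mem_univ i) (hzero _ _ hi), v.map_zero]
      exact le_top

end MinorValuation

section IntegralUnits

variable {R Γ : Type*} [Field R] [LinearOrderedAddCommGroupWithTop Γ] {v : AddValuation R Γ}
variable {ι κ : Type*} [Fintype ι] [DecidableEq ι] [Fintype κ] [DecidableEq κ] {m : ℕ}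

theorem AddValuation.map_nonsing_inv_apply_nonneg {P : Matrix ι ι R}
    (hP : ∀ i j, 0 ≤ v (P i j)) (hdet : v P.det = 0) (i j : ι) : 0 ≤ v (P⁻¹ i j) := by
  rw [inv_def, Matrix.smul_apply, Ring.inverse_eq_inv', smul_eq_mul, v.map_mul, v.map_inv, hdet,
    neg_zero, zero_add, adjugate_apply]
  refine v.map_det_nonneg fun k l => ?_
  rcases eq_or_ne k j with rfl | hk
  · rw [updateRow_self, Pi.single_apply]
    split_ifs <;> simp
  · rw [updateRow_ne hk]
    exact hP k l

theorem minMinorVal_mul_mul_of_integral {P : Matrix ι ι R} {Q : Matrix κ κ R}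
    (hP : ∀ i j, 0 ≤ v (P i j)) (hdP : v P.det = 0)
    (hQ : ∀ i j, 0 ≤ v (Q i j)) (hdQ : v Q.det = 0) (A : Matrix ι κ R) :
    minMinorVal v m (P * A * Q) = minMinorVal v m A := by
  have hPu : IsUnit P.det := isUnit_iff_ne_zero.mpr <| (v.ne_top_iff).mp (by simp [hdP])
  have hQu : IsUnit Q.det := isUnit_iff_ne_zero.mpr <| (v.ne_top_iff).mp (by simp [hdQ])
  refine le_antisymm ?_ ?_
  · calc minMinorVal v m (P * A * Q)
        ≤ minMinorVal v m (P⁻¹ * (P * A * Q) * Q⁻¹) :=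
          (minMinorVal_le_mul_left (v.map_nonsing_inv_apply_nonneg hP hdP) _).trans
            (minMinorVal_le_mul_right (v.map_nonsing_inv_apply_nonneg hQ hdQ) _)
      _ = minMinorVal v m A := by
          rw [Matrix.mul_assoc, Matrix.mul_assoc, mul_nonsing_inv _ hQu, Matrix.mul_one,
            ← Matrix.mul_assoc, nonsing_inv_mul _ hPu, Matrix.one_mul]
  · exact (minMinorVal_le_mul_left hP A).trans (minMinorVal_le_mul_right hQ _)

end IntegralUnits

theorem Equiv.Perm.exists_lt_apply_of_ne_one {n : ℕ} {σ : Equiv.Perm (Fin n)} (hσ : σ ≠ 1) :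
    ∃ i, i < σ i := by
  by_contra! hle
  refine hσ (Equiv.ext fun i => Fin.ext ?_)
  have hsum : ∑ i, ((σ i : Fin n) : ℕ) = ∑ i : Fin n, (i : ℕ) :=
    Equiv.sum_comp σ fun i : Fin n => (i : ℕ)
  exact (Finset.sum_eq_sum_iff_of_le fun i _ => Fin.le_iff_val_le_val.mp (hle i)).mp hsum i
    (Finset.mem_univ i)

section Iwahori

variable {K : Type*} [Field K] {n : ℕ}

theorem val_mul (x y : LaurentSeries K) : val (x * y) = val x + val y :=
  (HahnSeries.addVal ℤ K).map_mul x y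

theorem eps_ne_zero : eps K ≠ 0 := HahnSeries.single_ne_zero one_ne_zero

theorem val_eps_zpow (m : ℤ) : val (eps K ^ m) = m := by
  rw [eps, ← RatFunc.single_zpow]
  exact HahnSeries.orderTop_single one_ne_zero

theorem IwahoriForm.le_val_apply {N : Matrix (Fin n) (Fin n) (LaurentSeries K)}
    (hN : IwahoriForm N) (i j : Fin n) :
    ((if j < i then 1 else 0 : ℤ) : WithTop ℤ) ≤ val (N i j) := by
  rcases lt_trichotomy i j with hij | rfl | hij
  · simpa [hij.not_gt] using hN.2.1 i j hij
  · simp [hN.1 i]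
  · simpa [hij] using hN.2.2 i j hij

theorem IwahoriForm.val_det {N : Matrix (Fin n) (Fin n) (LaurentSeries K)}
    (hN : IwahoriForm N) : val N.det = 0 := by
  classical
  set v := HahnSeries.addVal ℤ K
  rw [det_apply', ← Finset.add_sum_erase _ _ (Finset.mem_univ 1)]
  have hdiag : v ((Equiv.Perm.sign (1 : Equiv.Perm (Fin n)) : ℤ)
      * ∏ i, N ((1 : Equiv.Perm (Fin n)) i) i) = 0 := by
    rw [v.map_mul, v.map_intCast_units, v.map_prod, zero_add]
    exact Finset.sum_eq_zero fun i _ => hN.1 i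
  -- Every other permutation moves some column `i` to a row `σ i > i`, below the diagonal.
  have hrest : 1 ≤ v (∑ σ ∈ Finset.univ.erase 1,
      (Equiv.Perm.sign σ : ℤ) * ∏ i, N (σ i) i) := by
    refine v.map_le_sum fun σ hσ => ?_
    obtain ⟨i₀, hi₀⟩ := Equiv.Perm.exists_lt_apply_of_ne_one (Finset.ne_of_mem_erase hσ)
    rw [v.map_mul, v.map_intCast_units, v.map_prod, zero_add]
    calc (1 : WithTop ℤ) ≤ ((∑ i, if i < σ i then 1 else 0 : ℤ) : WithTop ℤ) := by
          have := Finset.single_le_sum (f := fun i => if i < σ i then (1 : ℤ) else 0)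
            (fun i _ => by positivity) (Finset.mem_univ i₀)
          simp only [hi₀, if_true] at this
          exact_mod_cast this
      _ ≤ ∑ i, v (N (σ i) i) := by
          rw [WithTop.coe_sum]
          exact Finset.sum_le_sum fun i _ => hN.le_val_apply (σ i) i
  exact (v.map_add_eq_of_lt_left (hdiag ▸ zero_lt_one.trans_le hrest)).trans hdiag

variable (K) in
def epsDiag (d : Fin n → ℤ) : Matrix (Fin n) (Fin n) (LaurentSeries K) :=
  diagonal fun i => eps K ^ d i

theorem epsDiag_mul_epsDiag (d e : Fin n → ℤ) :
    epsDiag K d * epsDiag K e = epsDiag K (d + e) := by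
  simp only [epsDiag, diagonal_mul_diagonal, Pi.add_apply, zpow_add₀ eps_ne_zero]

theorem epsDiag_zero : epsDiag K (0 : Fin n → ℤ) = 1 := by
  simp [epsDiag]

theorem epsDiag_mul_mul_apply (d e : Fin n → ℤ) (A : Matrix (Fin n) (Fin n) (LaurentSeries K))
    (i j : Fin n) :
    (epsDiag K d * A * epsDiag K e) i j = eps K ^ d i * A i j * eps K ^ e j := by
  simp [epsDiag, mul_diagonal, diagonal_mul]

theorem val_epsDiag_mul_mul_apply (d e : Fin n → ℤ)
    (A : Matrix (Fin n) (Fin n) (LaurentSeries K)) (i j : Fin n) :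
    val ((epsDiag K d * A * epsDiag K e) i j) = d i + val (A i j) + e j := by
  rw [epsDiag_mul_mul_apply, val_mul, val_mul, val_eps_zpow, val_eps_zpow]

theorem det_epsDiag_mul_mul_epsDiag_neg (d : Fin n → ℤ)
    (A : Matrix (Fin n) (Fin n) (LaurentSeries K)) :
    (epsDiag K d * A * epsDiag K (-d)).det = A.det := by
  rw [det_mul, det_mul, mul_right_comm, ← det_mul, epsDiag_mul_epsDiag, add_neg_cancel,
    epsDiag_zero, det_one, one_mul]

theorem IwahoriForm.val_epsDiag_conj_apply_nonneg {N : Matrix (Fin n) (Fin n) (LaurentSeries K)}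
    (hN : IwahoriForm N) {d : Fin n → ℤ} (hanti : Antitone d) (hstep : ∀ i j, d j ≤ d i + 1)
    (i j : Fin n) : 0 ≤ val ((epsDiag K d * N * epsDiag K (-d)) i j) := by
  have hbound : 0 ≤ d i + (if j < i then 1 else 0) - d j := by
    split_ifs with hji
    · linarith [hstep i j]
    · linarith [hanti (not_lt.mp hji)]
  rw [val_epsDiag_mul_mul_apply]
  have hN := hN.le_val_apply i j
  generalize val (N i j) = x at hN ⊢
  induction x using WithTop.recTopCoe with
  | top => simp
  | coe z =>
      rw [Pi.neg_apply, ← WithTop.coe_add, ← WithTop.coe_add, WithTop.coe_nonneg]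
      have := WithTop.coe_le_coe.mp hN
      linarith

end Iwahori

section StepExponent

variable {K : Type*} [Field K] {n m : ℕ}

def stepExponent (r : ℕ) : Fin n → ℤ := fun i => if (i : ℕ) < r then 1 else 0

theorem stepExponent_antitone (r : ℕ) : Antitone (stepExponent (n := n) r) := by
  intro i j hij
  have := Fin.le_def.mp hij
  simp only [stepExponent]
  split_ifs <;> omega

theorem stepExponent_le_add_one (r : ℕ) (i j : Fin n) :
    stepExponent r j ≤ stepExponent r i + 1 := by
  simp only [stepExponent]
  split_ifs <;> omega

theorem IwahoriForm.minMinorVal_stepExponent_conj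
    {N₁ N₂ : Matrix (Fin n) (Fin n) (LaurentSeries K)} (h₁ : IwahoriForm N₁)
    (h₂ : IwahoriForm N₂) (r c : ℕ) (A : Matrix (Fin n) (Fin n) (LaurentSeries K)) :
    minMinorVal (HahnSeries.addVal ℤ K) m
        (epsDiag K (stepExponent r) * (N₁ * A * N₂) * epsDiag K (-stepExponent c))
      = minMinorVal (HahnSeries.addVal ℤ K) m
        (epsDiag K (stepExponent r) * A * epsDiag K (-stepExponent c)) := by
  set Dr := epsDiag K (stepExponent (n := n) r)
  set Dr' := epsDiag K (-stepExponent (n := n) r)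
  set Dc := epsDiag K (stepExponent (n := n) c)
  set Dc' := epsDiag K (-stepExponent (n := n) c)
  have hr : Dr' * Dr = 1 := by rw [epsDiag_mul_epsDiag, neg_add_cancel, epsDiag_zero]
  have hc : Dc' * Dc = 1 := by rw [epsDiag_mul_epsDiag, neg_add_cancel, epsDiag_zero]
  have hsplit :
      Dr * (N₁ * A * N₂) * Dc' = (Dr * N₁ * Dr') * (Dr * A * Dc') * (Dc * N₂ * Dc') :=
    calc Dr * (N₁ * A * N₂) * Dc'
        = Dr * N₁ * (Dr' * Dr) * A * (Dc' * Dc) * N₂ * Dc' := by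
          rw [hr, hc, Matrix.mul_one, Matrix.mul_one]; simp only [Matrix.mul_assoc]
      _ = _ := by simp only [Matrix.mul_assoc]
  rw [hsplit]
  exact minMinorVal_mul_mul_of_integral
    (h₁.val_epsDiag_conj_apply_nonneg (stepExponent_antitone r) (stepExponent_le_add_one r))
    (by rw [det_epsDiag_mul_mul_epsDiag_neg]; exact h₁.val_det)
    (h₂.val_epsDiag_conj_apply_nonneg (stepExponent_antitone c) (stepExponent_le_add_one c))
    (by rw [det_epsDiag_mul_mul_epsDiag_neg]; exact h₂.val_det) _

theorem stepExponent_succ_eq_update (i₀ : Fin n) :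
    stepExponent ((i₀ : ℕ) + 1) = Function.update (stepExponent i₀) i₀ 1 := by
  funext i
  rcases eq_or_ne i i₀ with rfl | hi
  · simp [stepExponent]
  · have : (i : ℕ) ≠ i₀ := Fin.val_ne_of_ne hi
    simp only [stepExponent, Function.update_of_ne hi]
    split_ifs <;> omega

theorem sum_comp_stepExponent_succ (σ : Fin n → Fin n) (a : Fin n → ℤ) (c : ℕ)
    (i₀ : Fin n) (g : ℤ → ℤ) :
    ∑ i, g (stepExponent (i₀ + 1) i + a i - stepExponent c (σ i))
        + g (a i₀ - stepExponent c (σ i₀))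
      = ∑ i, g (stepExponent i₀ i + a i - stepExponent c (σ i))
        + g (1 + a i₀ - stepExponent c (σ i₀)) := by
  classical
  set f := fun i => g (stepExponent i₀ i + a i - stepExponent c (σ i))
  have hupdate : (fun i => g (stepExponent (i₀ + 1) i + a i - stepExponent c (σ i)))
      = Function.update f i₀ (g (1 + a i₀ - stepExponent c (σ i₀))) := by
    funext i
    rcases eq_or_ne i i₀ with rfl | hi
    · simp only [stepExponent_succ_eq_update, Function.update_self]
    · simp only [stepExponent_succ_eq_update, Function.update_of_ne hi, f]
  have hf : f i₀ = g (a i₀ - stepExponent c (σ i₀)) := by simp [f, stepExponent]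
  rw [hupdate, Finset.sum_update_of_mem (Finset.mem_univ i₀),
    Finset.sum_eq_add_sum_sdiff_singleton_of_mem (Finset.mem_univ i₀) f, hf]
  abel

theorem eq_of_univ_val_map_stepExponent_eq {σ σ' : Fin n → Fin n} {a a' : Fin n → ℤ}
    (h : ∀ r c : ℕ,
      Finset.univ.val.map (fun i => stepExponent r i + a i - stepExponent c (σ i))
        = Finset.univ.val.map (fun i => stepExponent r i + a' i - stepExponent c (σ' i))) :
    σ = σ' ∧ a = a' := by
  have hsum : ∀ (r c : ℕ) (g : ℤ → ℤ),
      ∑ i, g (stepExponent r i + a i - stepExponent c (σ i))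
        = ∑ i, g (stepExponent r i + a' i - stepExponent c (σ' i)) := fun r c g => by
    simpa only [Multiset.map_map, Finset.sum_map_val, Function.comp_apply] using
      congrArg (fun s => (s.map g).sum) (h r c)
  have hrow : ∀ i c, a i - stepExponent c (σ i) = a' i - stepExponent c (σ' i) := by
    intro i c
    set g : ℤ → ℤ := fun z => if z ≤ a i - stepExponent c (σ i) then 1 else 0
    have hjump := sum_comp_stepExponent_succ σ a c i g
    have hjump' := sum_comp_stepExponent_succ σ' a' c i g
    rw [hsum, hsum i c] at hjump
    have key : g (a i - stepExponent c (σ i)) - g (1 + a i - stepExponent c (σ i))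
        = g (a' i - stepExponent c (σ' i)) - g (1 + a' i - stepExponent c (σ' i)) := by
      linarith
    simp only [g] at key
    split_ifs at key <;> omega
  have ha : a = a' := funext fun i => by simpa [stepExponent] using hrow i 0
  refine ⟨funext fun i => Fin.ext (le_antisymm ?_ ?_), ha⟩
  · have := hrow i ((σ' i : ℕ) + 1)
    simp only [ha, stepExponent, sub_right_inj] at this
    split_ifs at this <;> omega
  · have := hrow i ((σ i : ℕ) + 1)
    simp only [ha, stepExponent, sub_right_inj] at this
    split_ifs at this <;> omega

end StepExponent

section EpsMonomial

variable {K : Type*} [Field K] {n m : ℕ}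

variable (K) in
def epsMonomialMatrix (σ : Fin n → Fin n) (a : Fin n → ℤ) :
    Matrix (Fin n) (Fin n) (LaurentSeries K) :=
  of fun i j => if j = σ i then eps K ^ a i else 0

theorem EpsMonomial.exists_eq_epsMonomialMatrix {x : Matrix (Fin n) (Fin n) (LaurentSeries K)}
    (hx : EpsMonomial x) : ∃ σ a, Function.Injective σ ∧ x = epsMonomialMatrix K σ a := by
  obtain ⟨hrow, hcol, hpow⟩ := hx
  choose σ hσ hσ_unique using hrow
  have hzero : ∀ i j, j ≠ σ i → x i j = 0 := fun i j hj =>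
    not_not.mp (mt (hσ_unique i j) hj)
  choose a ha using fun i => hpow i (σ i) (hσ i)
  refine ⟨σ, a, fun i i' h => (hcol (σ i)).unique (hσ i) (h ▸ hσ i'), ?_⟩
  ext i j
  by_cases hj : j = σ i
  · simp [epsMonomialMatrix, hj, ha]
  · simp [epsMonomialMatrix, hj, hzero i j hj]

theorem minMinorVal_epsDiag_mul_epsMonomialMatrix {σ : Fin n → Fin n} (hσ : σ.Injective)
    (a d e : Fin n → ℤ) :
    minMinorVal (HahnSeries.addVal ℤ K) m (epsDiag K d * epsMonomialMatrix K σ a * epsDiag K e)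
      = minSubsetSum (fun i => ((d i + a i + e (σ i) : ℤ) : WithTop ℤ)) m := by
  refine minMinorVal_of_monomial hσ (fun i j hj => ?_) fun i => ?_
  · simp [epsDiag_mul_mul_apply, epsMonomialMatrix, hj]
  · change val _ = _
    simp [val_epsDiag_mul_mul_apply, epsMonomialMatrix, val_eps_zpow]

end EpsMonomial

theorem iwahori_coset_determined_by_minor_valuations_general
    (F : Type*) [Field F] (n : ℕ)
    (M M' x x' : Matrix (Fin n) (Fin n) (LaurentSeries (AlgebraicClosure F)))
    (hx : EpsMonomial x) (hx' : EpsMonomial x')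
    (hM : InIxI x M) (hM' : InIxI x' M')
    (hval : ∀ m : ℕ, 1 ≤ m → ∀ s t : Fin m → Fin n, StrictMono s → StrictMono t →
      val (M.submatrix s t).det = val (M'.submatrix s t).det) :
    x = x' := by
  obtain ⟨N₁, N₂, h₁, h₂, rfl⟩ := hM
  obtain ⟨N₁', N₂', h₁', h₂', rfl⟩ := hM'
  obtain ⟨σ, a, hσ, rfl⟩ := hx.exists_eq_epsMonomialMatrix
  obtain ⟨σ', a', hσ', rfl⟩ := hx'.exists_eq_epsMonomialMatrix
  suffices σ = σ' ∧ a = a' by obtain ⟨rfl, rfl⟩ := this; rfl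
  refine eq_of_univ_val_map_stepExponent_eq fun r c =>
    univ_val_map_eq_of_minSubsetSum_eq fun m hm => ?_
  have hminors :=
    (HahnSeries.addVal ℤ (AlgebraicClosure F)).map_det_submatrix_congr_of_strictMono (hval m hm)
  calc _ = _ := (minMinorVal_epsDiag_mul_epsMonomialMatrix hσ a _ _).symm
    _ = _ := (h₁.minMinorVal_stepExponent_conj h₂ r c _).symm
    _ = _ := minMinorVal_diagonal_mul_mul_congr hminors _ _
    _ = _ := h₁'.minMinorVal_stepExponent_conj h₂' r c _
    _ = _ := minMinorVal_epsDiag_mul_epsMonomialMatrix hσ' a' _ _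

/-- if `M ∈ I·x·I` and `M' ∈ I·x'·I` with `x`, `x'` ε-monomial matrices, and
if for every `1 ≤ m ≤ n` and every pair of strictly increasing `m`-tuples `s`, `t` of
indices the valuations of the determinants of the corresponding `m×m` minors of `M` and
`M'` agree, then `x = x'`.  (The element `x ∈ W̃` with `M ∈ IxI` is uniquely determined by
the valuations of the determinants of the minors of `M`.) -/
theorem iwahori_coset_determined_by_minor_valuations
    (F : Type*) [Field F] [Fintype F] (n : ℕ)
    (M M' x x' : Matrix (Fin n) (Fin n) (LaurentSeries (AlgebraicClosure F)))
    (hx : EpsMonomial x) (hx' : EpsMonomial x')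
    (hM : InIxI x M) (hM' : InIxI x' M')
    (hval : ∀ m : ℕ, 1 ≤ m → ∀ s t : Fin m → Fin n, StrictMono s → StrictMono t →
      val (M.submatrix s t).det = val (M'.submatrix s t).det) :
    x = x' :=
  iwahori_coset_determined_by_minor_valuations_general F n M M' x x' hx hx' hM hM' hval
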